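/- arXiv:1311.5127 — 2 statements merged into one kernel-verified Lean document; each statement's English description precedes it below -/
import Mathlib

section
/- Let k ∈ ℕ and let (B_n)_{n∈ℕ} be a sequence of bounded operators on H, each of class C^k(A). Assume that for every j ∈ {0,…,k} the sequence (ad_A^j B_n) converges strongly to a bounded operator C_j. Then C_0 = s-lim B_n belongs to C^k(A) and ad_A^j(C_0) = C_j for all j ∈ {0,…,k}. -/
open Filter

variable {H : Type} [NormedAddCommGroup H] [InnerProductSpace ℂ H] [CompleteSpace H]

/-- `C` is the bounded operator representing the commutator form
`F(φ,ψ) = ⟨Aφ, Bψ⟩ − ⟨φ, BAψ⟩` on `D(A) × D(A)`. -/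
def IsCommutatorOf (A : H →ₗ.[ℂ] H) (B C : H →L[ℂ] H) : Prop :=
  ∀ x y : A.domain,
    (inner ℂ (A x) (B (y : H)) : ℂ) - inner ℂ (x : H) (B (A y)) = inner ℂ (x : H) (C (y : H))

/-- `D` is a chain of iterated commutators for `B` of length `k`: `D 0 = B` and
`D (j+1) = ad_A (D j)` for `j < k`.  The existence of such a chain means `B ∈ C^k(A)`
with `ad_A^j B = D j`. -/
def IsAdChain (A : H →ₗ.[ℂ] H) (B : H →L[ℂ] H) (D : ℕ → H →L[ℂ] H) (k : ℕ) : Prop :=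
  D 0 = B ∧ ∀ j < k, IsCommutatorOf A (D j) (D (j + 1))

omit [CompleteSpace H] in
theorem IsCommutatorOf.of_tendsto {ι : Type*} {l : Filter ι} [l.NeBot]
    {A : H →ₗ.[ℂ] H} {B C : ι → H →L[ℂ] H} {B' C' : H →L[ℂ] H}
    (hcomm : ∀ᶠ i in l, IsCommutatorOf A (B i) (C i))
    (hB : ∀ x, Tendsto (fun i => B i x) l (nhds (B' x)))
    (hC : ∀ x, Tendsto (fun i => C i x) l (nhds (C' x))) :
    IsCommutatorOf A B' C' := by
  intro x y
  have hlhs : Tendsto (fun i => (inner ℂ (A x) (B i (y : H)) : ℂ) - inner ℂ (x : H) (B i (A y)))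
      l (nhds ((inner ℂ (A x) (B' (y : H)) : ℂ) - inner ℂ (x : H) (B' (A y)))) :=
    (tendsto_const_nhds.inner (hB y)).sub (tendsto_const_nhds.inner (hB (A y)))
  have hrhs : Tendsto (fun i => (inner ℂ (x : H) (C i (y : H)) : ℂ)) l
      (nhds (inner ℂ (x : H) (C' (y : H)))) :=
    tendsto_const_nhds.inner (hC y)
  refine tendsto_nhds_unique (hlhs.congr' ?_) hrhs
  filter_upwards [hcomm] with i hi using hi x y

theorem stmt_7_general (A : H →ₗ.[ℂ] H) (k : ℕ)
    (B : ℕ → H →L[ℂ] H) (D : ℕ → ℕ → H →L[ℂ] H)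
    (hchain : ∀ n, IsAdChain A (B n) (D n) k)
    (C : ℕ → H →L[ℂ] H)
    (hconv : ∀ j ≤ k, ∀ x : H, Tendsto (fun n => D n j x) atTop (nhds (C j x))) :
    IsAdChain A (C 0) C k :=
  ⟨rfl, fun j hj => IsCommutatorOf.of_tendsto (.of_forall fun n => (hchain n).2 j hj)
    (hconv j hj.le) (hconv (j + 1) hj)⟩

/-- If `(Bₙ) ⊆ C^k(A)`, with iterated commutator chains `Dₙ` (so `Dₙ 0 = Bₙ` and
`ad_A^j Bₙ = Dₙ j`), and for every `j ≤ k` the sequence `(ad_A^j Bₙ)ₙ` converges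
strongly to a bounded operator `C j`, then `C 0 = s-lim Bₙ` belongs to `C^k(A)` and
`ad_A^j (C 0) = C j` for all `j ≤ k`. -/
theorem stmt_7 (A : H →ₗ.[ℂ] H) (hA : IsSelfAdjoint A) (k : ℕ)
    (B : ℕ → H →L[ℂ] H) (D : ℕ → ℕ → H →L[ℂ] H)
    (hchain : ∀ n, IsAdChain A (B n) (D n) k)
    (C : ℕ → H →L[ℂ] H)
    (hconv : ∀ j ≤ k, ∀ x : H, Tendsto (fun n => D n j x) atTop (nhds (C j x))) :
    IsAdChain A (C 0) C k :=
  stmt_7_general A k B D hchain C hconv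
end

section
/- (Dyson expansions preserve C^k(A)) Let k ∈ ℕ, T > 0 and let (V(t,s))_{(s,t)∈[0,T]^2} be a family of bounded operators on H such that for each j ∈ {0,…,k} the map (t,s) ↦ ad_A^j(V(t,s)) is strongly continuous on [0,T]^2 (in particular each V(t,s) ∈ C^k(A)). Then for every (s,t) ∈ [0,T]^2 the operator Ω(t,s) defined by the norm-convergent Dyson series Ω(t,s) = I + Σ_{j=1}^∞ (−i)^j ∫_s^t ∫_s^{τ_1} … ∫_s^{τ_{j−1}} V(τ_1,s) ⋯ V(τ_j,s) dτ_j … dτ_1 belongs to C^k(A). -/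
open Set

variable {H : Type} [NormedAddCommGroup H] [InnerProductSpace ℂ H] [CompleteSpace H]

/-- `B` is of class `C^k(A)`. -/
def MemCk (A : H →ₗ.[ℂ] H) (B : H →L[ℂ] H) (k : ℕ) : Prop := ∃ D, IsAdChain A B D k

/-!
By the Leibniz rule `ad^m (V W) = ∑ᵢ (m choose i) ad^i V · ad^(m-i) W`, and because commutator
forms pass under strong integrals, the iterated commutators of each Dyson term
`W_{j+1}(t) = ∫_s^t V(τ) W_j(τ) dτ` are again strong integrals of strongly continuous families.
If `M` bounds `‖ad^i V‖` on `[0,T]²` (Banach–Steinhaus), they are bounded by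
`(2^k M |t - s|)^j / j!`, so the Dyson series of each iterated commutator converges in norm;
commutator forms pass to norm limits, hence `Ω(t,s) ∈ C^k(A)`.
-/

open MeasureTheory Finset
open scoped Nat

section SelfAdjoint

variable {A : H →ₗ.[ℂ] H}

lemma IsSelfAdjoint.inner_apply_eq (hA : IsSelfAdjoint A) (x y : A.domain) :
    inner ℂ (A x) (y : H) = inner ℂ (x : H) (A y) := by
  have hA' : A.adjoint = A := hA
  have hx : (x : H) ∈ A.adjoint.domain := by rw [hA']; exact x.2
  have hAx : A.adjoint ⟨x, hx⟩ = A x := (LinearPMap.ext_iff.mp hA').2 (hf := hx) (hg := x.2)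
  rw [← hAx]
  exact LinearPMap.adjoint_isFormalAdjoint hA.dense_domain ⟨x, hx⟩ y

lemma IsSelfAdjoint.exists_mem_domain_of_inner_eq (hA : IsSelfAdjoint A) {z w : H}
    (h : ∀ x : A.domain, inner ℂ (A x) z = inner ℂ (x : H) w) :
    ∃ hz : z ∈ A.domain, A ⟨z, hz⟩ = w := by
  have hw : ∀ x : A.domain, inner ℂ w (x : H) = inner ℂ z (A x) := fun x => by
    rw [← inner_conj_symm, ← h x, inner_conj_symm]
  rw [← (hA : A.adjoint = A)]
  exact ⟨LinearPMap.mem_adjoint_domain_of_exists z ⟨w, hw⟩,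
    LinearPMap.adjoint_apply_eq hA.dense_domain _ hw⟩

end SelfAdjoint

namespace IsCommutatorOf

variable {A : H →ₗ.[ℂ] H} {B B' C C' : H →L[ℂ] H}

section

omit [CompleteSpace H]

lemma zero : IsCommutatorOf A 0 0 := fun x y => by simp

lemma smul (c : ℂ) (hB : IsCommutatorOf A B B') : IsCommutatorOf A (c • B) (c • B') :=
  fun x y => by
    simp only [smul_apply, inner_smul_right, ← hB x y]
    ring

lemma nsmul (n : ℕ) (hB : IsCommutatorOf A B B') : IsCommutatorOf A (n • B) (n • B') := by
  simpa only [Nat.cast_smul_eq_nsmul] using hB.smul (n : ℂ)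

lemma sum {ι : Type*} (s : Finset ι) {B C : ι → H →L[ℂ] H}
    (h : ∀ i ∈ s, IsCommutatorOf A (B i) (C i)) :
    IsCommutatorOf A (∑ i ∈ s, B i) (∑ i ∈ s, C i) := fun x y => by
  simp only [_root_.sum_apply, inner_sum, ← sum_sub_distrib]
  exact sum_congr rfl fun i hi => h i hi x y

lemma hasSum {ι : Type*} {B C : ι → H →L[ℂ] H} {b c : H →L[ℂ] H}
    (h : ∀ i, IsCommutatorOf A (B i) (C i)) (hB : HasSum B b) (hC : HasSum C c) :
    IsCommutatorOf A b c := fun x y => by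
  have hinner : ∀ {F : ι → H →L[ℂ] H} {f : H →L[ℂ] H} (v w : H), HasSum F f →
      HasSum (fun i => inner ℂ v (F i w)) (inner ℂ v (f w)) := fun v w hF =>
    (innerSL ℂ v).hasSum ((ContinuousLinearMap.apply ℂ H w).hasSum hF)
  have hdiff := (hinner (A x) y hB).sub (hinner x (A y) hB)
  simp only [h _ x y] at hdiff
  exact hdiff.unique (hinner x y hC)

end

lemma one (hA : IsSelfAdjoint A) : IsCommutatorOf A 1 0 := fun x y => by
  simp [hA.inner_apply_eq]

lemma exists_apply_mem_domain (hA : IsSelfAdjoint A) (hC : IsCommutatorOf A C C')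
    (y : A.domain) : ∃ hy : C y ∈ A.domain, A ⟨C y, hy⟩ = C (A y) + C' y :=
  hA.exists_mem_domain_of_inner_eq fun x => by
    rw [inner_add_right, ← hC x y]
    ring

lemma mul (hA : IsSelfAdjoint A) (hB : IsCommutatorOf A B B') (hC : IsCommutatorOf A C C') :
    IsCommutatorOf A (B * C) (B' * C + B * C') := fun x y => by
  obtain ⟨hy, hACy⟩ := hC.exists_apply_mem_domain hA y
  have hBC := hB x ⟨C y, hy⟩
  rw [hACy, map_add, inner_add_right] at hBC
  simp only [mul_apply_eq_comp, add_apply, inner_add_right]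
  linear_combination hBC

end IsCommutatorOf

section Leibniz

variable {R : Type*}

def leibnizChain [Semiring R] (D E : ℕ → R) (m : ℕ) : R :=
  ∑ i ∈ range (m + 1), m.choose i • (D i * E (m - i))

lemma norm_leibnizChain_le [SeminormedRing R] {D E : ℕ → R} {m : ℕ} {a b : ℝ}
    (hD : ∀ i ≤ m, ‖D i‖ ≤ a) (hE : ∀ i ≤ m, ‖E i‖ ≤ b) :
    ‖leibnizChain D E m‖ ≤ 2 ^ m * (a * b) := by
  have ha : 0 ≤ a := (norm_nonneg _).trans (hD 0 m.zero_le)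
  calc ‖leibnizChain D E m‖
      ≤ ∑ i ∈ range (m + 1), ‖m.choose i • (D i * E (m - i))‖ := norm_sum_le _ _
    _ ≤ ∑ i ∈ range (m + 1), (m.choose i : ℝ) * (a * b) := by
      refine sum_le_sum fun i hi => norm_nsmul_le.trans ?_
      have him : i ≤ m := Nat.lt_succ_iff.mp (mem_range.mp hi)
      gcongr
      exact (norm_mul_le _ _).trans
        (mul_le_mul (hD i him) (hE _ (m.sub_le i)) (norm_nonneg _) ha)
    _ = 2 ^ m * (a * b) := by
      rw [← sum_mul, ← Nat.cast_sum, Nat.sum_range_choose]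
      push_cast
      ring

end Leibniz

lemma IsAdChain.mul {A : H →ₗ.[ℂ] H} (hA : IsSelfAdjoint A) {B C : H →L[ℂ] H}
    {D E : ℕ → H →L[ℂ] H} {k : ℕ} (hD : IsAdChain A B D k) (hE : IsAdChain A C E k) :
    IsAdChain A (B * C) (leibnizChain D E) k := by
  refine ⟨by simp [leibnizChain, hD.1, hE.1], fun m hm => ?_⟩
  have hterm : ∀ i ∈ range (m + 1), IsCommutatorOf A (m.choose i • (D i * E (m - i)))
      (m.choose i • (D i * E (m + 1 - i)) + m.choose i • (D (i + 1) * E (m - i))) := by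
    intro i hi
    have him : i ≤ m := Nat.lt_succ_iff.mp (mem_range.mp hi)
    have hcomm := ((hD.2 i (by omega)).mul hA (hE.2 (m - i) (by omega))).nsmul (m.choose i)
    rw [show m - i + 1 = m + 1 - i by omega, smul_add, add_comm] at hcomm
    exact hcomm
  have hsum := IsCommutatorOf.sum _ hterm
  rwa [sum_add_distrib, ← sum_choose_succ_nsmul (fun i j => D i * E j)] at hsum

lemma isAdChain_one {A : H →ₗ.[ℂ] H} (hA : IsSelfAdjoint A) (k : ℕ) :
    IsAdChain A 1 (fun m => if m = 0 then 1 else 0) k := by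
  refine ⟨rfl, fun m _ => ?_⟩
  rcases m with _ | m
  · simpa using IsCommutatorOf.one hA
  · simpa using IsCommutatorOf.zero

section StrongContinuity

variable {α E F : Type*} [TopologicalSpace α] [NormedAddCommGroup E] [NormedSpace ℂ E]
  [NormedAddCommGroup F] [NormedSpace ℂ F]

lemma exists_norm_le_of_continuousOn_apply [CompleteSpace E] {K : Set α} (hK : IsCompact K)
    {B : α → E →L[ℂ] F} (hB : ∀ x, ContinuousOn (fun p => B p x) K) :
    ∃ M, ∀ p ∈ K, ‖B p‖ ≤ M := by
  obtain ⟨M, hM⟩ := banach_steinhaus (g := fun p : K => B p) fun x => by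
    obtain ⟨C, hC⟩ := hK.exists_bound_of_continuousOn (hB x)
    exact ⟨C, fun p => hC p p.2⟩
  exact ⟨M, fun p hp => hM ⟨p, hp⟩⟩

lemma ContinuousOn.clm_apply_of_norm_le {K : Set α} {B : α → E →L[ℂ] F} {M : ℝ}
    (hB : ∀ x, ContinuousOn (fun p => B p x) K) (hM : ∀ p ∈ K, ‖B p‖ ≤ M)
    {g : α → E} (hg : ContinuousOn g K) : ContinuousOn (fun p => B p (g p)) K := by
  intro q hq
  have hsmall : Filter.Tendsto (fun p => B p (g p - g q)) (nhdsWithin q K) (nhds 0) := by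
    refine squeeze_zero_norm' (a := fun p => M * ‖g p - g q‖) ?_ ?_
    · filter_upwards [self_mem_nhdsWithin] with p hp
      exact (B p).le_of_opNorm_le (hM p hp) _
    · simpa using ((hg q hq).sub_const (g q)).norm.const_mul M
  simpa [ContinuousWithinAt] using hsmall.add (hB (g q) q hq)

lemma continuousOn_leibnizChain_apply {K : Set α} {V D : α → ℕ → E →L[ℂ] E} {m : ℕ} {M : ℝ}
    (hV : ∀ i ≤ m, ∀ x, ContinuousOn (fun p => V p i x) K)
    (hVM : ∀ i ≤ m, ∀ p ∈ K, ‖V p i‖ ≤ M)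
    (hD : ∀ i ≤ m, ∀ x, ContinuousOn (fun p => D p i x) K) (x : E) :
    ContinuousOn (fun p => leibnizChain (V p) (D p) m x) K := by
  simp only [leibnizChain, _root_.sum_apply, ← Nat.cast_smul_eq_nsmul ℂ, smul_apply,
    mul_apply_eq_comp]
  refine continuousOn_finsetSum _ fun i hi => ?_
  have him : i ≤ m := Nat.lt_succ_iff.mp (mem_range.mp hi)
  exact ((hD (m - i) (m.sub_le i) x).clm_apply_of_norm_le (hV i him) (hVM i him)).const_smul _

end StrongContinuity

section StrongIntegral

variable {E F : Type*} [NormedAddCommGroup E] [NormedSpace ℂ E]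
  [NormedAddCommGroup F] [NormedSpace ℂ F] {G : ℝ → E →L[ℂ] F} {a b : ℝ}

lemma norm_integral_apply_le {g : ℝ → ℝ} (hg : ∀ τ ∈ uIcc a b, ‖G τ‖ ≤ g τ)
    (hgi : IntervalIntegrable g volume a b) (x : E) :
    ‖∫ τ in a..b, G τ x‖ ≤ |∫ τ in a..b, g τ| * ‖x‖ :=
  calc ‖∫ τ in a..b, G τ x‖ ≤ |∫ τ in a..b, g τ * ‖x‖| :=
        intervalIntegral.norm_integral_le_abs_of_norm_le
          ((ae_restrict_iff' measurableSet_uIoc).mpr (ae_of_all _ fun τ hτ =>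
            (G τ).le_of_opNorm_le (hg τ (uIoc_subset_uIcc hτ)) x))
          (hgi.mul_const _)
    _ = |∫ τ in a..b, g τ| * ‖x‖ := by
      rw [intervalIntegral.integral_mul_const, abs_mul, abs_norm]

variable [CompleteSpace E]

open Classical in
/-- The strong integral `x ↦ ∫ τ in a..b, G τ x`, with junk value `0` unless `G` is strongly
continuous on `[a, b]`. -/
noncomputable def strongIntegral (G : ℝ → E →L[ℂ] F) (a b : ℝ) : E →L[ℂ] F :=
  if hG : ∀ x, ContinuousOn (fun τ => G τ x) (uIcc a b) then
    LinearMap.mkContinuousOfExistsBound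
      { toFun := fun x => ∫ τ in a..b, G τ x
        map_add' := fun x y => by
          simp only [map_add]
          exact intervalIntegral.integral_add (hG x).intervalIntegrable (hG y).intervalIntegrable
        map_smul' := fun c x => by
          simp only [map_smul, RingHom.id_apply]
          exact intervalIntegral.integral_smul c _ }
      (by
        obtain ⟨M, hM⟩ := exists_norm_le_of_continuousOn_apply isCompact_uIcc hG
        exact ⟨_, norm_integral_apply_le hM intervalIntegrable_const⟩)
  else 0

lemma strongIntegral_apply (hG : ∀ x, ContinuousOn (fun τ => G τ x) (uIcc a b)) (x : E) :
    strongIntegral G a b x = ∫ τ in a..b, G τ x := by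
  rw [strongIntegral, dif_pos hG]
  rfl

lemma norm_strongIntegral_le {g : ℝ → ℝ} (hg : ∀ τ ∈ uIcc a b, ‖G τ‖ ≤ g τ)
    (hgi : IntervalIntegrable g volume a b) :
    ‖strongIntegral G a b‖ ≤ |∫ τ in a..b, g τ| := by
  by_cases hG : ∀ x, ContinuousOn (fun τ => G τ x) (uIcc a b)
  · refine ContinuousLinearMap.opNorm_le_bound _ (abs_nonneg _) fun x => ?_
    rw [strongIntegral_apply hG]
    exact norm_integral_apply_le hg hgi x
  · simp [strongIntegral, hG]

lemma continuousOn_strongIntegral_apply {s : ℝ}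
    (hG : ∀ x, ContinuousOn (fun τ => G τ x) (Icc a b)) (hs : s ∈ Icc a b) (x : E) :
    ContinuousOn (fun t => strongIntegral G s t x) (Icc a b) := by
  have hab : a ≤ b := hs.1.trans hs.2
  have hprim := intervalIntegral.continuousOn_primitive_interval'
    ((hG x).intervalIntegrable_of_Icc (μ := volume) hab) (by rwa [uIcc_of_le hab])
  rw [uIcc_of_le hab] at hprim
  exact hprim.congr fun t ht =>
    strongIntegral_apply (fun y => (hG y).mono (uIcc_subset_Icc hs ht)) x

end StrongIntegral

lemma IsCommutatorOf.strongIntegral {A : H →ₗ.[ℂ] H} {G G' : ℝ → H →L[ℂ] H} {a b : ℝ}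
    (hG : ∀ x, ContinuousOn (fun τ => G τ x) (uIcc a b))
    (hG' : ∀ x, ContinuousOn (fun τ => G' τ x) (uIcc a b))
    (h : ∀ τ ∈ uIcc a b, IsCommutatorOf A (G τ) (G' τ)) :
    IsCommutatorOf A (strongIntegral G a b) (strongIntegral G' a b) := fun x y => by
  have hinner : ∀ {F : ℝ → H →L[ℂ] H}, (∀ x, ContinuousOn (fun τ => F τ x) (uIcc a b)) →
      ∀ v w : H, inner ℂ v (_root_.strongIntegral F a b w) = ∫ τ in a..b, inner ℂ v (F τ w) :=
    fun hF v w => by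
      rw [strongIntegral_apply hF]
      exact ((innerSL ℂ v).intervalIntegral_comp_comm (hF w).intervalIntegrable).symm
  have hint : ∀ v w : H, IntervalIntegrable (fun τ => inner ℂ v (G τ w)) volume a b :=
    fun v w => ((innerSL ℂ v).continuous.comp_continuousOn (hG w)).intervalIntegrable
  rw [hinner hG, hinner hG, hinner hG', ← intervalIntegral.integral_sub (hint _ _) (hint _ _)]
  exact intervalIntegral.integral_congr fun τ hτ => h τ hτ x y

lemma abs_integral_mul_pow_abs_sub_div_factorial {c : ℝ} (hc : 0 ≤ c) (s t : ℝ) (j : ℕ) :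
    |∫ τ in s..t, c * ((c * |τ - s|) ^ j / j !)| = (c * |t - s|) ^ (j + 1) / (j + 1)! := by
  have hintegrand : (fun τ => c * ((c * |τ - s|) ^ j / j !)) =
      fun τ => c ^ (j + 1) / j ! * |τ - s| ^ j := by
    funext τ
    ring
  rw [← Real.norm_eq_abs, intervalIntegral.norm_integral_eq_norm_integral_uIoc, hintegrand,
    integral_const_mul, integral_pow_abs_sub_uIoc, Real.norm_of_nonneg (by positivity),
    Nat.factorial_succ]
  push_cast
  field_simp
  ring

section Dyson

variable {A : H →ₗ.[ℂ] H} {k : ℕ} {a b s M : ℝ} {V : ℝ → ℕ → H →L[ℂ] H}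
  {W : ℕ → ℝ → H →L[ℂ] H}

theorem exists_adChain_dysonTerm (hA : IsSelfAdjoint A) (hs : s ∈ Icc a b)
    (hV : ∀ τ ∈ Icc a b, IsAdChain A (V τ 0) (V τ) k)
    (hVcont : ∀ i ≤ k, ∀ x, ContinuousOn (fun τ => V τ i x) (Icc a b))
    (hVM : ∀ i ≤ k, ∀ τ ∈ Icc a b, ‖V τ i‖ ≤ M) (hW0 : ∀ t, W 0 t = 1)
    (hWsucc : ∀ j t x, W (j + 1) t x = ∫ τ in s..t, V τ 0 (W j τ x)) (j : ℕ) :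
    ∃ D : ℝ → ℕ → H →L[ℂ] H, (∀ t ∈ Icc a b, IsAdChain A (W j t) (D t) k) ∧
      (∀ m ≤ k, ∀ x, ContinuousOn (fun t => D t m x) (Icc a b)) ∧
      ∀ m ≤ k, ∀ t ∈ Icc a b, ‖D t m‖ ≤ (2 ^ k * M * |t - s|) ^ j / j ! := by
  have hM : 0 ≤ M := (norm_nonneg _).trans (hVM 0 k.zero_le s hs)
  induction j with
  | zero =>
    refine ⟨fun _ m => if m = 0 then 1 else 0, fun t _ => hW0 t ▸ isAdChain_one hA k,
      fun m _ x => continuousOn_const, fun m _ t _ => ?_⟩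
    simp only [pow_zero, Nat.factorial_zero, Nat.cast_one, div_one]
    split_ifs
    exacts [ContinuousLinearMap.norm_id_le, by simp]
  | succ j ih =>
    obtain ⟨D, hDchain, hDcont, hDbd⟩ := ih
    set E : ℝ → ℕ → H →L[ℂ] H := fun τ => leibnizChain (V τ) (D τ)
    have hEchain : ∀ τ ∈ Icc a b, IsAdChain A (V τ 0 * W j τ) (E τ) k :=
      fun τ hτ => (hV τ hτ).mul hA (hDchain τ hτ)
    have hEcont : ∀ m ≤ k, ∀ x, ContinuousOn (fun τ => E τ m x) (Icc a b) := fun m hm =>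
      continuousOn_leibnizChain_apply (fun i hi => hVcont i (hi.trans hm))
        (fun i hi => hVM i (hi.trans hm)) (fun i hi => hDcont i (hi.trans hm))
    have hEbd : ∀ m ≤ k, ∀ τ ∈ Icc a b,
        ‖E τ m‖ ≤ 2 ^ k * M * ((2 ^ k * M * |τ - s|) ^ j / j !) := fun m hm τ hτ => by
      refine (norm_leibnizChain_le (fun i hi => hVM i (hi.trans hm) τ hτ)
        (fun i hi => hDbd i (hi.trans hm) τ hτ)).trans ?_
      rw [← mul_assoc]
      gcongr
      · norm_num
    have hEcont' : ∀ t ∈ Icc a b, ∀ m ≤ k, ∀ x, ContinuousOn (fun τ => E τ m x) (uIcc s t) :=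
      fun t ht m hm x => (hEcont m hm x).mono (uIcc_subset_Icc hs ht)
    refine ⟨fun t m => strongIntegral (fun τ => E τ m) s t, fun t ht => ⟨?_, fun m hm => ?_⟩,
      fun m hm x => continuousOn_strongIntegral_apply (hEcont m hm) hs x, fun m hm t ht => ?_⟩
    · ext x
      rw [strongIntegral_apply (hEcont' t ht 0 k.zero_le), hWsucc]
      refine intervalIntegral.integral_congr fun τ hτ => ?_
      simp [(hEchain τ (uIcc_subset_Icc hs ht hτ)).1]
    · exact IsCommutatorOf.strongIntegral (hEcont' t ht m hm.le) (hEcont' t ht (m + 1) hm)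
        fun τ hτ => (hEchain τ (uIcc_subset_Icc hs ht hτ)).2 m hm
    · refine (norm_strongIntegral_le (fun τ hτ => hEbd m hm τ (uIcc_subset_Icc hs ht hτ))
        (Continuous.intervalIntegrable (by fun_prop) _ _)).trans_eq ?_
      exact abs_integral_mul_pow_abs_sub_div_factorial (by positivity) s t j

end Dyson

section Series

omit [CompleteSpace H]

variable {A : H →ₗ.[ℂ] H} {B : H →L[ℂ] H} {D : ℕ → H →L[ℂ] H} {k : ℕ}

lemma IsAdChain.smul (c : ℂ) (h : IsAdChain A B D k) : IsAdChain A (c • B) (c • D) k :=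
  ⟨by rw [Pi.smul_apply, h.1], fun m hm => (h.2 m hm).smul c⟩

lemma IsAdChain.tsum {ι : Type*} {B : ι → H →L[ℂ] H} {b : H →L[ℂ] H} {D : ι → ℕ → H →L[ℂ] H}
    (hD : ∀ i, IsAdChain A (B i) (D i) k) (hB : HasSum B b)
    (hsum : ∀ m ≤ k, Summable fun i => D i m) : IsAdChain A b (fun m => ∑' i, D i m) k := by
  refine ⟨?_, fun m hm => IsCommutatorOf.hasSum (fun i => (hD i).2 m hm)
    (hsum m hm.le).hasSum (hsum (m + 1) hm).hasSum⟩
  simp only [(hD _).1]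
  exact hB.tsum_eq

end Series

theorem stmt_10_general (A : H →ₗ.[ℂ] H) (hA : IsSelfAdjoint A) (k : ℕ)
    (T : ℝ)
    (Dv : ℝ → ℝ → ℕ → H →L[ℂ] H)
    (hchain : ∀ t ∈ Icc (0:ℝ) T, ∀ s ∈ Icc (0:ℝ) T, ∀ j < k,
      IsCommutatorOf A (Dv t s j) (Dv t s (j + 1)))
    (hcont : ∀ j ≤ k, ∀ x : H,
      ContinuousOn (fun p : ℝ × ℝ => Dv p.1 p.2 j x) (Icc (0:ℝ) T ×ˢ Icc (0:ℝ) T))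
    (W : ℕ → ℝ → ℝ → H →L[ℂ] H)
    (hW0 : ∀ t s : ℝ, W 0 t s = 1)
    (hWsucc : ∀ (j : ℕ) (t s : ℝ) (x : H),
      W (j + 1) t s x = ∫ τ in s..t, (Dv τ s 0) (W j τ s x))
    (Ω : ℝ → ℝ → H →L[ℂ] H)
    (hΩ : ∀ t s : ℝ, HasSum (fun j : ℕ => ((-Complex.I) ^ j) • W j t s) (Ω t s)) :
    ∀ t ∈ Icc (0:ℝ) T, ∀ s ∈ Icc (0:ℝ) T, MemCk A (Ω t s) k := by
  intro t ht s hs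
  have hVcont : ∀ i ≤ k, ∀ x, ContinuousOn (fun τ => Dv τ s i x) (Icc 0 T) := fun i hi x =>
    (hcont i hi x).comp (continuous_id.prodMk continuous_const).continuousOn
      fun τ hτ => ⟨hτ, hs⟩
  obtain ⟨M, hM⟩ : ∃ M, ∀ i ≤ k, ∀ τ ∈ Icc 0 T, ‖Dv τ s i‖ ≤ M := by
    choose Mi hMi using fun i : Fin (k + 1) =>
      exists_norm_le_of_continuousOn_apply isCompact_Icc (hVcont i (Nat.lt_succ_iff.mp i.2))
    obtain ⟨M, hM⟩ := Finite.exists_le Mi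
    exact ⟨M, fun i hi τ hτ => (hMi ⟨i, Nat.lt_succ_of_le hi⟩ τ hτ).trans (hM _)⟩
  choose D hDchain _ hDbd using exists_adChain_dysonTerm (W := fun j t => W j t s) hA hs
    (fun τ hτ => ⟨rfl, hchain τ hτ s hs⟩) hVcont hM (fun t => hW0 t s) (fun j t => hWsucc j t s)
  refine ⟨_, IsAdChain.tsum (fun j => ((hDchain j t ht).smul ((-Complex.I) ^ j))) (hΩ t s)
    fun m hm => ?_⟩
  refine .of_norm_bounded (Real.summable_pow_div_factorial (2 ^ k * M * |t - s|)) fun j => ?_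
  rw [Pi.smul_apply, norm_smul, norm_pow, norm_neg, Complex.norm_I, one_pow, one_mul]
  exact hDbd j m hm t ht

/-- Dyson expansions preserve `C^k(A)`.  The family `(V(t,s))` has iterated commutator
chains `Dv t s` (so `V t s = Dv t s 0` and `ad_A^j V(t,s) = Dv t s j`), each strongly
continuous on `[0,T]²`.  `W j t s` is the `j`-fold iterated (strong) integral
`∫_s^t … ∫_s^{τ_{j−1}} V(τ₁,s)⋯V(τ_j,s) dτ_j…dτ₁`, defined recursively, and `Ω(t,s)`
is the sum of the norm-convergent Dyson series `Σ_j (−i)^j W j t s`.  Then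
`Ω(t,s) ∈ C^k(A)` for all `(s,t) ∈ [0,T]²`. -/
theorem stmt_10 (A : H →ₗ.[ℂ] H) (hA : IsSelfAdjoint A) (k : ℕ)
    (T : ℝ) (hT : 0 < T)
    (Dv : ℝ → ℝ → ℕ → H →L[ℂ] H)
    (hchain : ∀ t ∈ Icc (0:ℝ) T, ∀ s ∈ Icc (0:ℝ) T, ∀ j < k,
      IsCommutatorOf A (Dv t s j) (Dv t s (j + 1)))
    (hcont : ∀ j ≤ k, ∀ x : H,
      ContinuousOn (fun p : ℝ × ℝ => Dv p.1 p.2 j x) (Icc (0:ℝ) T ×ˢ Icc (0:ℝ) T))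
    (W : ℕ → ℝ → ℝ → H →L[ℂ] H)
    (hW0 : ∀ t s : ℝ, W 0 t s = 1)
    (hWsucc : ∀ (j : ℕ) (t s : ℝ) (x : H),
      W (j + 1) t s x = ∫ τ in s..t, (Dv τ s 0) (W j τ s x))
    (Ω : ℝ → ℝ → H →L[ℂ] H)
    (hΩ : ∀ t s : ℝ, HasSum (fun j : ℕ => ((-Complex.I) ^ j) • W j t s) (Ω t s)) :
    ∀ t ∈ Icc (0:ℝ) T, ∀ s ∈ Icc (0:ℝ) T, MemCk A (Ω t s) k :=
  stmt_10_general A hA k T Dv hchain hcont W hW0 hWsucc Ω hΩ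
end
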